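/- arXiv:2007.01612 — 3 statements merged into one kernel-verified Lean document; each statement's English description precedes it below -/
import Mathlib

section
/- Let Σ be a symmetric positive definite d×d matrix with trace(Σ) ≤ σ²d, and let 0 < β ≤ 1/(2σ²). Then β² · Σ_{k=0}^{M} trace(Σ · Σ · (I - β(2 - βσ²)Σ)^k) ≤ (β · trace(Σ))/(2 - βσ²) ≤ d/3, provided additionally ‖Σ‖ ≤ σ² so that I - β(2-βσ²)Σ ⪰ 0. -/
/-!
With `c = β (2 - β σ²)` and `T = 1 - c Σ`, the bounds `‖Σ‖ ≤ σ²` and `c σ² ≤ 1` make `T`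
positive semidefinite. Since `c Σ = 1 - T`, the geometric sum telescopes:
`c ∑_{k ≤ M} tr(Σ Σ Tᵏ) = tr Σ - tr(Σ T^(M+1))`, and the last trace is that of a product of two
positive semidefinite matrices, hence nonnegative. Dividing by `β (2 - β σ²)` gives the first
bound; the second follows from `tr Σ ≤ σ² d` and `β σ² ≤ 1/2`.
-/

open scoped Matrix.Norms.L2Operator MatrixOrder ComplexOrder
open Finset

namespace Matrix

variable {n : Type*} [Fintype n] [DecidableEq n]

theorem smul_sum_trace_mul_mul_one_sub_smul_pow {R : Type*} [CommRing R]
    (A : Matrix n n R) (c : R) (m : ℕ) :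
    c * ∑ k ∈ range m, (A * A * (1 - c • A) ^ k).trace
      = A.trace - (A * (1 - c • A) ^ m).trace := by
  set T := 1 - c • A
  have hcA : c • A = 1 - T := by simp only [T]; abel
  calc c * ∑ k ∈ range m, (A * A * T ^ k).trace
      = (A * ((c • A) * ∑ k ∈ range m, T ^ k)).trace := by
        simp only [Finset.mul_sum, trace_sum, mul_smul_comm, smul_mul_assoc, trace_smul,
          smul_eq_mul, mul_assoc]
    _ = A.trace - (A * T ^ m).trace := by
        rw [hcA, mul_neg_geom_sum, mul_sub, mul_one, trace_sub]

variable {𝕜 : Type*} [RCLike 𝕜]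

theorem PosSemidef.trace_mul_nonneg {A B : Matrix n n 𝕜} (hA : A.PosSemidef)
    (hB : B.PosSemidef) : 0 ≤ (A * B).trace := by
  set S := CFC.sqrt A
  have hS : Sᴴ = S := (nonneg_iff_posSemidef.mp (CFC.sqrt_nonneg A)).isHermitian
  calc 0 ≤ (Sᴴ * B * S).trace := (hB.conjTranspose_mul_mul_same S).trace_nonneg
    _ = (A * B).trace := by
      rw [hS, trace_mul_cycle, ← CFC.sqrt_mul_sqrt_self A hA.nonneg]

theorem re_star_dotProduct_mulVec_le (A : Matrix n n 𝕜) (x : n → 𝕜) :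
    RCLike.re (star x ⬝ᵥ (A *ᵥ x)) ≤ ‖A‖ * RCLike.re (star x ⬝ᵥ x) := by
  set v : EuclideanSpace 𝕜 n := WithLp.toLp 2 x
  have hAv : ‖(EuclideanSpace.equiv n 𝕜).symm (A *ᵥ x)‖ ≤ ‖A‖ * ‖v‖ := A.l2_opNorm_mulVec v
  calc RCLike.re (star x ⬝ᵥ (A *ᵥ x))
      = RCLike.re (inner 𝕜 v ((EuclideanSpace.equiv n 𝕜).symm (A *ᵥ x))) := by
        rw [dotProduct_comm]; rfl
    _ ≤ ‖v‖ * ‖(EuclideanSpace.equiv n 𝕜).symm (A *ᵥ x)‖ := re_inner_le_norm _ _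
    _ ≤ ‖v‖ * (‖A‖ * ‖v‖) := by gcongr
    _ = ‖A‖ * RCLike.re (star x ⬝ᵥ x) := by
        rw [mul_left_comm, ← sq, ← inner_self_eq_norm_sq (𝕜 := 𝕜), dotProduct_comm]; rfl

theorem IsHermitian.posSemidef_one_sub_smul {A : Matrix n n 𝕜} (hA : A.IsHermitian) {c : ℝ}
    (hc : 0 ≤ c) (hcA : c * ‖A‖ ≤ 1) : (1 - c • A).PosSemidef := by
  have hH : (1 - c • A).IsHermitian := isHermitian_one.sub (hA.smul (IsSelfAdjoint.all c))
  refine .of_dotProduct_mulVec_nonneg hH fun x => RCLike.nonneg_iff.mpr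
    ⟨?_, hH.im_star_dotProduct_mulVec_self x⟩
  have hx : 0 ≤ RCLike.re (star x ⬝ᵥ x) :=
    (RCLike.nonneg_iff.mp (dotProduct_star_self_nonneg x)).1
  have hAx := A.re_star_dotProduct_mulVec_le x
  calc 0 ≤ (1 - c * ‖A‖) * RCLike.re (star x ⬝ᵥ x) := mul_nonneg (sub_nonneg.mpr hcA) hx
    _ ≤ RCLike.re (star x ⬝ᵥ x) - c * RCLike.re (star x ⬝ᵥ (A *ᵥ x)) := by nlinarith
    _ = RCLike.re (star x ⬝ᵥ ((1 - c • A) *ᵥ x)) := by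
        simp [sub_mulVec, smul_mulVec, dotProduct_sub, dotProduct_smul, RCLike.smul_re]

theorem PosSemidef.smul_sum_trace_mul_mul_one_sub_smul_pow_le {A : Matrix n n 𝕜} {c : 𝕜}
    (hA : A.PosSemidef) (hT : (1 - c • A).PosSemidef) (m : ℕ) :
    c * ∑ k ∈ range m, (A * A * (1 - c • A) ^ k).trace ≤ A.trace := by
  rw [smul_sum_trace_mul_mul_one_sub_smul_pow]
  exact sub_le_self _ (hA.trace_mul_nonneg (hT.pow m))

end Matrix

theorem mul_le_half_of_le_one_div_two_mul {β s : ℝ} (hs : 0 ≤ s) (hβ : β ≤ 1 / (2 * s)) :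
    β * s ≤ 1 / 2 :=
  calc β * s ≤ 1 / (2 * s) * s := mul_le_mul_of_nonneg_right hβ hs
    _ = s / s / 2 := by ring
    _ ≤ 1 / 2 := by gcongr; exact div_self_le_one s

theorem trace_geometric_sum_bound_general {d : ℕ} (Sig : Matrix (Fin d) (Fin d) ℝ)
    (hSig : Sig.PosDef) (σ : ℝ)
    (htr : Sig.trace ≤ σ ^ 2 * d)
    (β : ℝ) (hβ : 0 < β) (hβσ : β ≤ 1 / (2 * σ ^ 2))
    (hnorm : ‖Sig‖ ≤ σ ^ 2) (M : ℕ) :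
    β ^ 2 * ∑ k ∈ Finset.range (M + 1),
        (Sig * Sig * (1 - (β * (2 - β * σ ^ 2)) • Sig) ^ k).trace
      ≤ β * Sig.trace / (2 - β * σ ^ 2) ∧
    β * Sig.trace / (2 - β * σ ^ 2) ≤ d / 3 := by
  have hβσ' : β * σ ^ 2 ≤ 1 / 2 := mul_le_half_of_le_one_div_two_mul (sq_nonneg σ) hβσ
  have hgap : 0 < 2 - β * σ ^ 2 := by linarith
  set c := β * (2 - β * σ ^ 2)
  -- `c σ² = 1 - (1 - β σ²)²`
  have hcσ : c * ‖Sig‖ ≤ 1 :=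
    calc c * ‖Sig‖ ≤ c * σ ^ 2 := by gcongr
      _ ≤ 1 := by nlinarith [sq_nonneg (1 - β * σ ^ 2)]
  have hsum := hSig.posSemidef.smul_sum_trace_mul_mul_one_sub_smul_pow_le
    (hSig.isHermitian.posSemidef_one_sub_smul (by positivity) hcσ) (M + 1)
  constructor
  · rw [le_div_iff₀ hgap]
    calc _ = β * (c * ∑ k ∈ Finset.range (M + 1), (Sig * Sig * (1 - c • Sig) ^ k).trace) := by
          ring
      _ ≤ β * Sig.trace := by gcongr
  · rw [div_le_iff₀ hgap]
    calc β * Sig.trace ≤ β * σ ^ 2 * d := by rw [mul_assoc]; gcongr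
      _ ≤ d / 3 * (2 - β * σ ^ 2) := by nlinarith [Nat.cast_nonneg (α := ℝ) d]

theorem trace_geometric_sum_bound {d : ℕ} (Sig : Matrix (Fin d) (Fin d) ℝ)
    (hSig : Sig.PosDef) (σ : ℝ) (hσ : 0 < σ)
    (htr : Sig.trace ≤ σ ^ 2 * d)
    (β : ℝ) (hβ : 0 < β) (hβσ : β ≤ 1 / (2 * σ ^ 2))
    (hnorm : ‖Sig‖ ≤ σ ^ 2) (M : ℕ) :
    β ^ 2 * ∑ k ∈ Finset.range (M + 1),
        (Sig * Sig * (1 - (β * (2 - β * σ ^ 2)) • Sig) ^ k).trace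
      ≤ β * Sig.trace / (2 - β * σ ^ 2) ∧
    β * Sig.trace / (2 - β * σ ^ 2) ≤ d / 3 :=
  trace_geometric_sum_bound_general Sig hSig σ htr β hβ hβσ hnorm M
end

section
/- Let u = (u₁,…,u_H) and u' = (u'₁,…,u'_H) be two valid occupancy measures in a layered episodic MDP, meaning each u_h is a probability distribution on X_h × A and Eᵀu_{h+1} = Pᵀ_h u_h (and similarly for u'), where Eᵀ takes the state marginal and Pᵀ_h is the transition pushforward. Then for each layer h, D(u_h ‖ u'_h) ≤ Σ_{k=1}^{h} D_C(u_k ‖ u'_k), where D_C(u_k‖u'_k) = Σ_{x,a} u_k(x,a) log(π_{u,k}(a|x)/π_{u',k}(a|x)) is the conditional relative entropy with π_{u,k}(a|x) = u_k(x,a)/Σ_{a'} u_k(x,a'). -/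
/-!
By the chain rule, `D(u_h ‖ u'_h) = D(Eᵀu_h ‖ Eᵀu'_h) + D_C(u_h ‖ u'_h)`. The flow constraint
says that `Eᵀu_{h+1}` is the image of `u_h` under the stochastic matrix `P_h`, so by data
processing the marginal term at layer `h + 1` is at most `D(u_h ‖ u'_h)`; at layer `0` it
vanishes because `X_0` is a single state. Induction on `h` finishes the proof.
-/

open Finset Real

section RelEntropy

variable {ι κ σ A : Type*} [Fintype ι] [Fintype κ] [Fintype A]

/-- `D(u ‖ u')`. -/
noncomputable def relEntropy (u u' : ι → ℝ) : ℝ := ∑ i, u i * log (u i / u' i)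

/-- `Eᵀu`. -/
def stateMarginal (u : σ × A → ℝ) (x : σ) : ℝ := ∑ a, u (x, a)

/-- `D_C(u ‖ u')`: the relative entropy of the policies `π_u(a | x) = u(x, a) / Eᵀu(x)`,
averaged over `u`. -/
noncomputable def condRelEntropy [Fintype σ] (u u' : σ × A → ℝ) : ℝ :=
  ∑ p, u p * log ((u p / stateMarginal u p.1) / (u' p / stateMarginal u' p.1))

theorem sub_le_mul_log_div {x y : ℝ} (hx : 0 < x) (hy : 0 < y) : x - y ≤ x * log (x / y) := by
  have h := mul_le_mul_of_nonneg_left (one_sub_inv_le_log_of_pos (div_pos hx hy)) hx.le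
  rwa [inv_div, mul_sub, mul_one, mul_div_cancel₀ _ hx.ne'] at h

omit [Fintype ι] in
/-- The log-sum inequality, with weights `w`. -/
theorem mul_log_div_le_sum_weighted {s : Finset ι} {w u u' : ι → ℝ} (hw : ∀ i ∈ s, 0 ≤ w i)
    (hu : ∀ i ∈ s, 0 < u i) (hu' : ∀ i ∈ s, 0 < u' i) :
    (∑ i ∈ s, w i * u i) * log ((∑ i ∈ s, w i * u i) / ∑ i ∈ s, w i * u' i)
      ≤ ∑ i ∈ s, w i * (u i * log (u i / u' i)) := by
  by_cases hw0 : ∀ i ∈ s, w i = 0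
  · have hzero : ∀ v : ι → ℝ, ∑ i ∈ s, w i * v i = 0 := fun v =>
      sum_eq_zero fun i hi => by rw [hw0 i hi, zero_mul]
    simp [hzero]
  push Not at hw0
  obtain ⟨j, hj, hwj⟩ := hw0
  have hpos : ∀ v : ι → ℝ, (∀ i ∈ s, 0 < v i) → 0 < ∑ i ∈ s, w i * v i := fun v hv =>
    sum_pos' (fun i hi => mul_nonneg (hw i hi) (hv i hi).le)
      ⟨j, hj, mul_pos ((hw j hj).lt_of_ne' hwj) (hv j hj)⟩
  set a := ∑ i ∈ s, w i * u i
  set b := ∑ i ∈ s, w i * u' i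
  have ha := hpos u hu
  have hb := hpos u' hu'
  have hterm : ∀ i ∈ s, w i * u i - a / b * (w i * u' i)
      ≤ w i * (u i * log (u i / u' i)) - log (a / b) * (w i * u i) := by
    intro i hi
    have h := sub_le_mul_log_div (hu i hi) (mul_pos (hu' i hi) (div_pos ha hb))
    rw [← div_div, log_div (div_pos (hu i hi) (hu' i hi)).ne' (div_pos ha hb).ne'] at h
    linarith [mul_le_mul_of_nonneg_left h (hw i hi)]
  have h := sum_le_sum hterm
  rw [sum_sub_distrib, sum_sub_distrib, ← mul_sum, ← mul_sum, div_mul_cancel₀ _ hb.ne'] at h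
  linarith

theorem relEntropy_comp_le {K : ι → κ → ℝ} (hK : ∀ i j, 0 ≤ K i j)
    (hKrow : ∀ i, ∑ j, K i j = 1) {u u' : ι → ℝ} (hu : ∀ i, 0 < u i) (hu' : ∀ i, 0 < u' i) :
    relEntropy (fun j => ∑ i, K i j * u i) (fun j => ∑ i, K i j * u' i) ≤ relEntropy u u' :=
  calc relEntropy (fun j => ∑ i, K i j * u i) (fun j => ∑ i, K i j * u' i)
      ≤ ∑ j, ∑ i, K i j * (u i * log (u i / u' i)) :=
        sum_le_sum fun j _ => mul_log_div_le_sum_weighted (fun i _ => hK i j) (fun i _ => hu i)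
          (fun i _ => hu' i)
    _ = relEntropy u u' := by
        rw [sum_comm]
        simp only [← sum_mul, hKrow, one_mul]
        rfl

theorem relEntropy_self (u : ι → ℝ) : relEntropy u u = 0 := by
  refine sum_eq_zero fun i _ => ?_
  rcases eq_or_ne (u i) 0 with h | h
  · rw [h, zero_mul]
  · rw [div_self h, log_one, mul_zero]

theorem stateMarginal_pos [Nonempty A] {u : σ × A → ℝ} (hu : ∀ p, 0 < u p) (x : σ) :
    0 < stateMarginal u x :=
  sum_pos (fun a _ => hu (x, a)) univ_nonempty

theorem stateMarginal_of_unique [Fintype σ] [Unique σ] (u : σ × A → ℝ) (x : σ) :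
    stateMarginal u x = ∑ p, u p := by
  rw [Fintype.sum_prod_type, Fintype.sum_unique, Unique.eq_default x]
  rfl

theorem relEntropy_eq_stateMarginal_add_condRelEntropy [Fintype σ] [Nonempty A]
    {u u' : σ × A → ℝ} (hu : ∀ p, 0 < u p) (hu' : ∀ p, 0 < u' p) :
    relEntropy u u'
      = relEntropy (stateMarginal u) (stateMarginal u') + condRelEntropy u u' := by
  have hsplit : ∀ p : σ × A, u p * log (u p / u' p)
      = u p * log (stateMarginal u p.1 / stateMarginal u' p.1)
        + u p * log ((u p / stateMarginal u p.1) / (u' p / stateMarginal u' p.1)) := by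
    intro p
    have hm := stateMarginal_pos hu p.1
    have hm' := stateMarginal_pos hu' p.1
    rw [← mul_add, ← log_mul (div_pos hm hm').ne'
      (div_pos (div_pos (hu p) hm) (div_pos (hu' p) hm')).ne']
    congr 2
    field_simp
  rw [relEntropy, sum_congr rfl fun p _ => hsplit p, sum_add_distrib, Fintype.sum_prod_type]
  simp only [← sum_mul]
  rfl

end RelEntropy

/-- In a layered episodic MDP (layer `0` a singleton, transitions from layer `h` to
layer `h+1` via the kernel `P h`), for any two occupancy measures `u, u'` satisfying the
flow constraints, the KL divergence at layer `h` is bounded by the sum of the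
conditional KL divergences over layers `0,…,h`. -/
theorem occupancy_kl_le_sum_conditional_kl
    {X : ℕ → Type*} [∀ h, Fintype (X h)] [Unique (X 0)]
    {A : Type*} [Fintype A]
    (P : ∀ h, X h × A → X (h + 1) → ℝ)
    (hPnonneg : ∀ h p x', 0 ≤ P h p x')
    (hProw : ∀ h p, ∑ x', P h p x' = 1)
    (u u' : ∀ h, X h × A → ℝ)
    (hupos : ∀ h p, 0 < u h p) (hu'pos : ∀ h p, 0 < u' h p)
    (husum : ∀ h, ∑ p, u h p = 1) (hu'sum : ∀ h, ∑ p, u' h p = 1)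
    (huflow : ∀ h x', ∑ a, u (h + 1) (x', a) = ∑ p, P h p x' * u h p)
    (hu'flow : ∀ h x', ∑ a, u' (h + 1) (x', a) = ∑ p, P h p x' * u' h p)
    (h : ℕ) :
    ∑ p, u h p * Real.log (u h p / u' h p)
      ≤ ∑ k ∈ Finset.range (h + 1), ∑ p : X k × A,
          u k p * Real.log
            ((u k p / ∑ a', u k (p.1, a')) / (u' k p / ∑ a', u' k (p.1, a'))) := by
  obtain ⟨p, -⟩ := exists_ne_zero_of_sum_ne_zero (by rw [husum 0]; exact one_ne_zero)
  have : Nonempty A := ⟨p.2⟩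
  change relEntropy (u h) (u' h) ≤ ∑ k ∈ range (h + 1), condRelEntropy (u k) (u' k)
  induction h with
  | zero =>
    have hmarg : stateMarginal (u 0) = stateMarginal (u' 0) := funext fun x => by
      rw [stateMarginal_of_unique, stateMarginal_of_unique, husum, hu'sum]
    rw [sum_range_one, relEntropy_eq_stateMarginal_add_condRelEntropy (hupos 0) (hu'pos 0),
      hmarg, relEntropy_self, zero_add]
  | succ n ih =>
    have hdpi : relEntropy (stateMarginal (u (n + 1))) (stateMarginal (u' (n + 1)))
        ≤ relEntropy (u n) (u' n) := by
      rw [show stateMarginal (u (n + 1)) = _ from funext (huflow n),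
        show stateMarginal (u' (n + 1)) = _ from funext (hu'flow n)]
      exact relEntropy_comp_le (hPnonneg n) (hProw n) (hupos n) (hu'pos n)
    rw [relEntropy_eq_stateMarginal_add_condRelEntropy (hupos (n + 1)) (hu'pos (n + 1)),
      sum_range_succ]
    linarith
end

section
/- Let p and q be probability distributions on a finite set. Then ‖p - q‖₁ ≤ √(2 D(p‖q)). -/
/-!
Everything rests on the one-variable bound `3 (t - 1)² ≤ (2t + 4) klFun t` for `t ≥ 0`, where
`klFun t = t log t + 1 - t`: both sides vanish to second order at `t = 1`, and the derivative of
their difference is `4 ((t + 1) log t - 2 (t - 1))`, which has the sign of `t - 1`. Rescaling gives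
`(x - y)² / w ≤ x log (x / y) - x + y` with weight `w = (2x + 4y) / 3`. For probability vectors the
weights `(2 p s + 4 q s) / 3` sum to `2`, so Cauchy–Schwarz in Sedrakyan's form yields
`(∑ |p s - q s|)² / 2 ≤ ∑ (p s - q s)² / w s ≤ D(p‖q)`.
-/

open Real Set Finset InformationTheory

lemma isMinOn_Ioi_of_hasDerivAt {f f' : ℝ → ℝ} {a : ℝ} (ha : 0 < a)
    (hf : ∀ t, 0 < t → HasDerivAt f (f' t) t) (hf' : ∀ t, 0 < t → 0 ≤ (t - a) * f' t) :
    IsMinOn f (Ioi 0) a := by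
  have hcont : ContinuousOn f (Ioi 0) := fun t ht => (hf t ht).continuousAt.continuousWithinAt
  intro t (ht : 0 < t)
  rcases le_total a t with hat | hta
  · refine monotoneOn_of_hasDerivWithinAt_nonneg (f' := f') (convex_Ici a)
      (hcont.mono fun u hu => ha.trans_le hu) (fun u hu => ?_) (fun u hu => ?_)
      (le_refl a) hat hat
    all_goals rw [interior_Ici] at hu
    · exact (hf u (ha.trans hu)).hasDerivWithinAt
    · exact nonneg_of_mul_nonneg_right (hf' u (ha.trans hu)) (sub_pos.2 hu)
  · refine antitoneOn_of_hasDerivWithinAt_nonpos (f' := f') (convex_Ioc 0 a)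
      (hcont.mono Ioc_subset_Ioi_self) (fun u hu => ?_) (fun u hu => ?_)
      ⟨ht, hta⟩ ⟨ha, le_rfl⟩ hta
    all_goals rw [interior_Ioc] at hu
    · exact (hf u hu.1).hasDerivWithinAt
    · exact nonpos_of_mul_nonneg_right (hf' u hu.1) (sub_neg.2 hu.2)

lemma sub_one_mul_add_one_mul_log_sub_nonneg {t : ℝ} (ht : 0 < t) :
    0 ≤ (t - 1) * ((t + 1) * log t - 2 * (t - 1)) := by
  let g : ℝ → ℝ := fun t => (t + 1) * log t - 2 * (t - 1)
  have hg : ∀ t, 0 < t → HasDerivAt g (log t + t⁻¹ - 1) t := fun t ht => by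
    refine ((((hasDerivAt_id' t).add_const 1).mul (hasDerivAt_log ht.ne')).sub
      (((hasDerivAt_id' t).sub_const 1).const_mul 2)).congr_deriv ?_
    field_simp
    ring
  have hmono : MonotoneOn g (Ioi 0) := by
    refine monotoneOn_of_hasDerivWithinAt_nonneg (f' := fun t => log t + t⁻¹ - 1) (convex_Ioi 0)
      (fun t ht => (hg t ht).continuousAt.continuousWithinAt)
      (fun t ht => ?_) (fun t ht => ?_)
    all_goals rw [interior_Ioi] at ht
    · exact (hg t ht).hasDerivWithinAt
    · linarith [one_sub_inv_le_log_of_pos ht]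
  have hg1 : g 1 = 0 := by simp [g]
  rcases le_total 1 t with h | h
  · exact mul_nonneg (sub_nonneg.2 h) (hg1 ▸ hmono (mem_Ioi.2 one_pos) ht h)
  · exact mul_nonneg_of_nonpos_of_nonpos (sub_nonpos.2 h) (hg1 ▸ hmono ht (mem_Ioi.2 one_pos) h)

lemma three_mul_sq_sub_one_le_mul_klFun {t : ℝ} (ht : 0 ≤ t) :
    3 * (t - 1) ^ 2 ≤ (2 * t + 4) * klFun t := by
  rcases ht.eq_or_lt with rfl | ht
  · norm_num [klFun_zero]
  let F : ℝ → ℝ := fun t => (2 * t + 4) * klFun t - 3 * (t - 1) ^ 2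
  have hF : ∀ t, 0 < t → HasDerivAt F (4 * ((t + 1) * log t - 2 * (t - 1))) t := fun t ht => by
    refine ((((hasDerivAt_id' t).const_mul 2).add_const 4).mul (hasDerivAt_klFun ht.ne')).sub
      ((((hasDerivAt_id' t).sub_const 1).pow 2).const_mul 3) |>.congr_deriv ?_
    rw [klFun_apply]
    ring
  have hmin := isMinOn_Ioi_of_hasDerivAt one_pos hF
    (fun t ht => by nlinarith [sub_one_mul_add_one_mul_log_sub_nonneg ht]) (mem_Ioi.2 ht)
  simp only [F, klFun_one, mem_ofPred_eq] at hmin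
  linarith

lemma sq_sub_div_le_mul_log_div_sub_add {x y : ℝ} (hx : 0 ≤ x) (hy : 0 < y) :
    (x - y) ^ 2 / ((2 * x + 4 * y) / 3) ≤ x * log (x / y) - x + y := by
  have hbound := three_mul_sq_sub_one_le_mul_klFun (div_nonneg hx hy.le)
  have hrhs : x * log (x / y) - x + y = y * klFun (x / y) := by
    rw [klFun_apply]
    field_simp
    ring
  rw [hrhs, div_le_iff₀ (by positivity)]
  calc (x - y) ^ 2 = y ^ 2 * (3 * (x / y - 1) ^ 2) / 3 := by field_simp
    _ ≤ y ^ 2 * ((2 * (x / y) + 4) * klFun (x / y)) / 3 := by gcongr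
    _ = y * klFun (x / y) * ((2 * x + 4 * y) / 3) := by field_simp

/-- Pinsker's inequality for finitely supported probability vectors. -/
theorem pinsker_inequality {S : Type*} [Fintype S]
    (p q : S → ℝ) (hp : ∀ s, 0 ≤ p s) (hq : ∀ s, 0 < q s)
    (hpsum : ∑ s, p s = 1) (hqsum : ∑ s, q s = 1) :
    ∑ s, |p s - q s| ≤ Real.sqrt (2 * ∑ s, p s * Real.log (p s / q s)) := by
  let w : S → ℝ := fun s => (2 * p s + 4 * q s) / 3
  have hw : ∀ s ∈ Finset.univ, 0 < w s := fun s _ => by have := hp s; have := hq s; positivity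
  have hwsum : ∑ s, w s = 2 := by
    simp only [w, ← sum_div, sum_add_distrib, ← mul_sum, hpsum, hqsum]
    norm_num
  have hsedrakyan := sq_sum_div_le_sum_sq_div Finset.univ (fun s => |p s - q s|) hw
  have hterm : ∑ s, |p s - q s| ^ 2 / w s ≤ ∑ s, (p s * log (p s / q s) - p s + q s) :=
    sum_le_sum fun s _ => by
      simpa only [sq_abs] using sq_sub_div_le_mul_log_div_sub_add (hp s) (hq s)
  rw [hwsum] at hsedrakyan
  rw [sum_add_distrib, sum_sub_distrib, hpsum, hqsum] at hterm
  apply le_sqrt_of_sq_le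
  linarith
end
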